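/- Converse relative monotonicity for hidden choice: let C₁ : X×Y₁ → ℝ and C₂ : X×Y₂ → ℝ be compatible channels, π a prior on X, g a gain function, and p ∈ (0,1]. If V_g[π, C₁ ⊕_p C] ≤ V_g[π, C₂ ⊕_p C] for every channel C compatible with C₁ and C₂, then V_g[π,C₁] ≤ V_g[π,C₂]. -/

import Mathlib

open Finset

/-- A channel with input set `X` and output set `Y`: entries are nonnegative
and each row sums to `1`. -/
def IsChannel {X Y : Type*} [Fintype Y] (C : X → Y → ℝ) : Prop :=
  (∀ x y, 0 ≤ C x y) ∧ ∀ x, ∑ y, C x y = 1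

/-- A channel with input set `X` whose output set is the finset `S` of a common
ambient type `Ω`: entries are nonnegative, each row sums to `1` over `S`, and
entries vanish outside `S`. -/
def IsChannelOn {X Ω : Type*} (S : Finset Ω) (C : X → Ω → ℝ) : Prop :=
  (∀ x y, 0 ≤ C x y) ∧ (∀ x, ∑ y ∈ S, C x y = 1) ∧ ∀ x y, y ∉ S → C x y = 0

/-- Parallel composition `C₁ ∥ C₂`. -/
def par {X Y₁ Y₂ : Type*} (C₁ : X → Y₁ → ℝ) (C₂ : X → Y₂ → ℝ) : X → Y₁ × Y₂ → ℝ :=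
  fun x y => C₁ x y.1 * C₂ x y.2

/-- Visible choice `C₁ ⊞_p C₂`, on the disjoint union of the output sets. -/
def vis {X Y₁ Y₂ : Type*} (p : ℝ) (C₁ : X → Y₁ → ℝ) (C₂ : X → Y₂ → ℝ) : X → Y₁ ⊕ Y₂ → ℝ :=
  fun x => Sum.elim (fun y => p * C₁ x y) (fun y => (1 - p) * C₂ x y)

/-- Hidden choice `C₁ ⊕_p C₂` for channels whose output sets lie in a common
ambient type (pointwise convex combination; this agrees with the case analysis
on `Y₁ ∩ Y₂`, `Y₁ \ Y₂`, `Y₂ \ Y₁` since channels vanish outside their output sets). -/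
def hid {X Ω : Type*} (p : ℝ) (C₁ C₂ : X → Ω → ℝ) : X → Ω → ℝ :=
  fun x y => p * C₁ x y + (1 - p) * C₂ x y

/-- Equality up to a permutation of the output set, `C₁ ≐ C₂`. -/
def PermEq {X Y₁ Y₂ : Type*} (C₁ : X → Y₁ → ℝ) (C₂ : X → Y₂ → ℝ) : Prop :=
  ∃ ψ : Y₁ ≃ Y₂, ∀ x y, C₁ x y = C₂ x (ψ y)

/-- Cascading `CD` of channels. -/
def cascade {X Y Z : Type*} [Fintype Y] (C : X → Y → ℝ) (D : Y → Z → ℝ) : X → Z → ℝ :=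
  fun x z => ∑ y, C x y * D y z

/-- `Refines C₁ C₂` (written `C₁ ⊑ C₂`): there is a channel `D` with `C₁D = C₂`. -/
def Refines {X Y₁ Y₂ : Type*} [Fintype Y₁] [Fintype Y₂] (C₁ : X → Y₁ → ℝ)
    (C₂ : X → Y₂ → ℝ) : Prop :=
  ∃ D : Y₁ → Y₂ → ℝ, IsChannel D ∧ cascade C₁ D = C₂

/-- Equivalence of channels: mutual refinement. -/
def EquivCh {X Y₁ Y₂ : Type*} [Fintype Y₁] [Fintype Y₂] (C₁ : X → Y₁ → ℝ)
    (C₂ : X → Y₂ → ℝ) : Prop :=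
  Refines C₁ C₂ ∧ Refines C₂ C₁

/-- A prior: a probability distribution on the finite input set `X`. -/
def IsPrior {X : Type*} [Fintype X] (π : X → ℝ) : Prop :=
  (∀ x, 0 ≤ π x) ∧ ∑ x, π x = 1

/-- A gain function `g : W × X → [0,1]`. -/
def IsGain {W X : Type*} (g : W → X → ℝ) : Prop :=
  ∀ w x, 0 ≤ g w x ∧ g w x ≤ 1

/-- Posterior g-vulnerability `V_g[π, C]`. -/
noncomputable def postV {W X Y : Type*} [Fintype W] [Nonempty W] [Fintype X] [Fintype Y]
    (π : X → ℝ) (g : W → X → ℝ) (C : X → Y → ℝ) : ℝ :=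
  ∑ y, univ.sup' univ_nonempty fun w => ∑ x, C x y * π x * g w x

/-! Instantiating the hypothesis with `C := C₁` gives
`V[C₁] = V[C₁ ⊕_p C₁] ≤ V[C₂ ⊕_p C₁] ≤ p V[C₂] + (1 - p) V[C₁]`, the last step by convexity of
posterior vulnerability in the channel; cancelling `(1 - p) V[C₁]` and dividing by `p > 0`
gives the claim. -/

lemma hid_self {X Ω : Type*} (p : ℝ) (C : X → Ω → ℝ) : hid p C C = C := by
  funext x y
  simp only [hid]
  ring

lemma sum_hid_mul {X Ω : Type*} [Fintype X] (p : ℝ) (A B : X → Ω → ℝ) (y : Ω) (f : X → ℝ) :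
    ∑ x, hid p A B x y * f x = p * ∑ x, A x y * f x + (1 - p) * ∑ x, B x y * f x := by
  simp only [hid, mul_sum, ← sum_add_distrib]
  exact sum_congr rfl fun x _ => by ring

lemma postV_hid_le {W X Ω : Type*} [Fintype W] [Nonempty W] [Fintype X] [Fintype Ω]
    (π : X → ℝ) (g : W → X → ℝ) (A B : X → Ω → ℝ) {p : ℝ} (hp0 : 0 ≤ p) (hp1 : p ≤ 1) :
    postV π g (hid p A B) ≤ p * postV π g A + (1 - p) * postV π g B := by
  simp only [postV, mul_sum, ← sum_add_distrib, mul_assoc]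
  refine sum_le_sum fun y _ => sup'_le _ _ fun w _ => ?_
  rw [sum_hid_mul]
  gcongr
  · exact le_sup' (fun w => ∑ x, A x y * (π x * g w x)) (mem_univ w)
  · exact le_sup' (fun w => ∑ x, B x y * (π x * g w x)) (mem_univ w)

theorem relative_monotonicity_hidden_choice_converse {W X Ω : Type*}
    [Fintype W] [Nonempty W] [Fintype X] [Fintype Ω]
    (Y₁ : Finset Ω) (C₁ C₂ : X → Ω → ℝ)
    (h₁ : IsChannelOn Y₁ C₁)
    (π : X → ℝ) (g : W → X → ℝ)
    (p : ℝ) (hp0 : 0 < p) (hp1 : p ≤ 1)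
    (h : ∀ (S : Finset Ω) (C : X → Ω → ℝ), IsChannelOn S C →
      postV π g (hid p C₁ C) ≤ postV π g (hid p C₂ C)) :
    postV π g C₁ ≤ postV π g C₂ := by
  have hself : postV π g C₁ ≤ postV π g (hid p C₂ C₁) := by
    simpa only [hid_self] using h Y₁ C₁ h₁
  have hconv := postV_hid_le π g C₂ C₁ hp0.le hp1
  have hscaled : p * postV π g C₁ ≤ p * postV π g C₂ := by linarith
  exact le_of_mul_le_mul_left hscaled hp0
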